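/- arXiv:2505.02505 — 3 statements merged into one kernel-verified Lean document; each statement's English description precedes it below -/
import Mathlib

section
/- Let X = {1,...,n}, A ⊆ X, and x, y, z distinct elements of X not in A. Then for every m ≥ 0, the identity (x−y)·Σ_m(X∖(A∪{x,y})) − (z−y)·Σ_m(X∖(A∪{z,y})) − (x−z)·Σ_m(X∖(A∪{x,z})) = 0 holds in the Boolean-algebra vector space 2^[X]. -/
instance finsetUnionCommMonoid (n : ℕ) : CommMonoid (Finset (Fin n)) where
  mul := (· ∪ ·)
  one := ∅
  mul_assoc := Finset.union_assoc
  one_mul := Finset.empty_union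
  mul_one := Finset.union_empty
  mul_comm := Finset.union_comm

/-- The Boolean algebra `2^[X]`: the `K`-vector space with basis the subsets of
`X = {1,…,n}`, with multiplication induced by union of subsets. -/
abbrev BooleanAlg (K : Type*) [CommSemiring K] (n : ℕ) :=
  MonoidAlgebra K (Finset (Fin n))

noncomputable def el {K : Type*} [CommSemiring K] {n : ℕ} (x : Fin n) : BooleanAlg K n :=
  MonoidAlgebra.single {x} 1

/-- `Σ_m(A)`: the sum of all `m`-subsets of `A`, as an element of `2^[X]`. -/
noncomputable def Sig (K : Type*) [CommSemiring K] (n m : ℕ) (A : Finset (Fin n)) :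
    BooleanAlg K n :=
  ∑ S ∈ A.powersetCard m, MonoidAlgebra.single S (1 : K)

lemma finset_mul_def {n : ℕ} (s t : Finset (Fin n)) : s * t = s ∪ t := rfl

lemma sig_zero (K : Type*) [CommSemiring K] (n : ℕ) (A : Finset (Fin n)) :
    Sig K n 0 A = 1 := by
  simp [Sig, Finset.powersetCard_zero]
  rfl

lemma sig_insert (K : Type*) [CommSemiring K] (n m : ℕ) (B : Finset (Fin n)) (c : Fin n)
    (hc : c ∉ B) :
    Sig K n (m+1) (insert c B) = Sig K n (m+1) B + el c * Sig K n m B := by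
  unfold Sig
  rw [Finset.powersetCard_succ_insert hc, Finset.sum_union, Finset.sum_image, Finset.mul_sum]
  · congr 1
    apply Finset.sum_congr rfl
    intro s hs
    rw [el, MonoidAlgebra.single_mul_single, one_mul, finset_mul_def]
    simp [Finset.insert_eq, -Finset.singleton_union]
  · intro a ha b hb hab
    have ha' := Finset.mem_powersetCard.mp ha
    have hb' := Finset.mem_powersetCard.mp hb
    have hca : c ∉ a := fun h => hc (ha'.1 h)
    have hcb : c ∉ b := fun h => hc (hb'.1 h)
    rw [← Finset.erase_insert hca, ← Finset.erase_insert hcb, hab]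
  · rw [Finset.disjoint_left]
    intro s hs hs'
    have := (Finset.mem_powersetCard.mp hs).1
    simp only [Finset.mem_image] at hs'
    obtain ⟨t, ht, rfl⟩ := hs'
    exact hc (this (Finset.mem_insert_self c t))

lemma compl_insert {n : ℕ} (S : Finset (Fin n)) (c : Fin n) (hc : c ∉ S) :
    Sᶜ = insert c (S ∪ {c})ᶜ := by
  ext a
  by_cases h : a = c <;> simp [h, hc]

theorem sigma_three_term_identity {K : Type*} [Field K] [CharZero K] {n : ℕ} (m : ℕ)
    (A : Finset (Fin n)) (x y z : Fin n)
    (hxy : x ≠ y) (hxz : x ≠ z) (hyz : y ≠ z)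
    (hx : x ∉ A) (hy : y ∉ A) (hz : z ∉ A) :
    (el x - el y) * Sig K n m (A ∪ {x, y})ᶜ
      - (el z - el y) * Sig K n m (A ∪ {z, y})ᶜ
      - (el x - el z) * Sig K n m (A ∪ {x, z})ᶜ = 0 := by
  cases m with
  | zero => rw [sig_zero, sig_zero, sig_zero]; ring
  | succ m =>
    set B := (A ∪ {x, y, z})ᶜ with hB
    have h1 : (A ∪ {x, y})ᶜ = insert z B := by
      rw [hB]
      rw [compl_insert (A ∪ {x, y}) z (by simp [hz, Ne.symm hxz, Ne.symm hyz])]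
      congr 1
      ext a; simp
    have h2 : (A ∪ {z, y})ᶜ = insert x B := by
      rw [hB, compl_insert (A ∪ {z, y}) x (by simp [hx, hxz, hxy])]
      congr 1
      ext a; simp; tauto
    have h3 : (A ∪ {x, z})ᶜ = insert y B := by
      rw [hB, compl_insert (A ∪ {x, z}) y (by simp [hy, Ne.symm hxy, hyz])]
      congr 1
      ext a; simp; tauto
    have hzB : z ∉ B := by simp [hB]
    have hxB : x ∉ B := by simp [hB]
    have hyB : y ∉ B := by simp [hB]
    rw [h1, h2, h3, sig_insert K n m B z hzB, sig_insert K n m B x hxB,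
      sig_insert K n m B y hyB]
    ring
end

section
/- Let 0 ≤ t ≤ k ≤ n/2. The inclusion matrix W_{t,k}, with rows indexed by t-subsets and columns by k-subsets of {1,...,n}, with (A,B)-entry 1 if A ⊆ B and 0 otherwise, has full rank C(n,t) over a field of characteristic zero. -/
/-- The set of `j`-element subsets of `X = {1,…,n}`. -/
abbrev KSubsets (n j : ℕ) := {S : Finset (Fin n) // S.card = j}

/-- The permutation module `M_j`: the `K`-vector space with basis the `j`-subsets of `X`. -/
abbrev PM (K : Type*) [Field K] (n j : ℕ) := KSubsets n j →₀ K

/-- The map `ψ_k^{(k−t)} : M_k → M_t` sending a `k`-subset to the sum of all of its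
`t`-subsets; its matrix is the inclusion matrix `W_{t,k}`. -/
noncomputable def psiPM (K : Type*) [Field K] (n t k : ℕ) : PM K n k →ₗ[K] PM K n t :=
  Finsupp.lsum K fun S : KSubsets n k => LinearMap.toSpanSingleton K (PM K n t)
    (∑ A : KSubsets n t, if A.1 ⊆ S.1 then Finsupp.single A (1 : K) else 0)

set_option linter.unusedSectionVars false

open Finset Matrix

def incMat (R : Type*) [Zero R] [One R] (n j l : ℕ) :
    Matrix (KSubsets n j) (KSubsets n l) R :=
  fun A S => if A.1 ⊆ S.1 then 1 else 0

section counting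
variable {n : ℕ}

lemma card_interval (A S : Finset (Fin n)) (hAS : A ⊆ S) (m : ℕ) (hm : A.card ≤ m) :
    (Finset.univ.filter fun B : KSubsets n m => A ⊆ B.1 ∧ B.1 ⊆ S).card
      = (S.card - A.card).choose (m - A.card) := by
  rw [← Finset.card_sdiff_of_subset hAS, ← Finset.card_powersetCard (m - A.card) (S \ A)]
  refine Finset.card_bij' (fun B _ => B.1 \ A) (fun U hU => ⟨U ∪ A, ?_⟩) ?_ ?_ ?_ ?_
  · rw [Finset.mem_powersetCard] at hU
    have hdisj : Disjoint U A :=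
      Finset.disjoint_of_subset_left hU.1 Finset.sdiff_disjoint
    rw [Finset.card_union_of_disjoint hdisj, hU.2]
    omega
  · intro B hB
    simp only [Finset.mem_filter, Finset.mem_univ, true_and] at hB
    rw [Finset.mem_powersetCard]
    exact ⟨Finset.sdiff_subset_sdiff hB.2 le_rfl, by rw [Finset.card_sdiff_of_subset hB.1, B.2]⟩
  · intro U hU
    rw [Finset.mem_powersetCard] at hU
    simp only [Finset.mem_filter, Finset.mem_univ, true_and]
    exact ⟨Finset.subset_union_right, Finset.union_subset ((hU.1).trans Finset.sdiff_subset) hAS⟩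
  · intro B hB
    simp only [Finset.mem_filter, Finset.mem_univ, true_and] at hB
    exact Subtype.ext (Finset.sdiff_union_of_subset hB.1)
  · intro U hU
    rw [Finset.mem_powersetCard] at hU
    have hdisj : Disjoint U A :=
      Finset.disjoint_of_subset_left hU.1 Finset.sdiff_disjoint
    exact Finset.union_sdiff_cancel_right hdisj

lemma card_supersets (T : Finset (Fin n)) (m : ℕ) (hTm : T.card ≤ m) :
    (Finset.univ.filter fun S : KSubsets n m => T ⊆ S.1).card
      = (n - T.card).choose (m - T.card) := by
  have h := card_interval T Finset.univ (Finset.subset_univ T) m hTm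
  simp only [Finset.card_univ, Fintype.card_fin] at h
  rw [← h]
  congr 1
  ext S
  simp [Finset.subset_univ]

lemma card_supersets_zero (T : Finset (Fin n)) (m : ℕ) (h : m < T.card) :
    (Finset.univ.filter fun S : KSubsets n m => T ⊆ S.1).card = 0 := by
  rw [Finset.card_eq_zero, Finset.filter_eq_empty_iff]
  intro S _ hTS
  have := Finset.card_le_card hTS
  rw [S.2] at this
  omega

lemma card_subsets (D : Finset (Fin n)) (c : ℕ) :
    (Finset.univ.filter fun C : KSubsets n c => C.1 ⊆ D).card = D.card.choose c := by
  have h := card_interval ∅ D (Finset.empty_subset D) c (by simp)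
  simpa using h

end counting

section entries
variable {R : Type*} [CommRing R] {n : ℕ}

lemma incMat_mul_apply (t j k : ℕ) (A : KSubsets n t) (S : KSubsets n k) :
    (incMat R n t j * incMat R n j k) A S
      = ((Finset.univ.filter fun B : KSubsets n j => A.1 ⊆ B.1 ∧ B.1 ⊆ S.1).card : R) := by
  rw [Matrix.mul_apply, ← Finset.sum_boole]
  refine Finset.sum_congr rfl fun B _ => ?_
  simp only [incMat, ite_and]
  split_ifs <;> simp

lemma incMat_mul_transpose_apply (j l : ℕ) (A B : KSubsets n j) :
    (incMat R n j l * (incMat R n j l)ᵀ) A B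
      = ((Finset.univ.filter fun S : KSubsets n l => A.1 ∪ B.1 ⊆ S.1).card : R) := by
  rw [Matrix.mul_apply, ← Finset.sum_boole]
  refine Finset.sum_congr rfl fun S _ => ?_
  simp only [incMat, Matrix.transpose_apply, Finset.union_subset_iff, ite_and]
  split_ifs <;> simp

lemma incMat_transpose_mul_apply (j l : ℕ) (A B : KSubsets n l) :
    ((incMat R n j l)ᵀ * incMat R n j l) A B
      = ((Finset.univ.filter fun C : KSubsets n j => C.1 ⊆ A.1 ∩ B.1).card : R) := by
  rw [Matrix.mul_apply, ← Finset.sum_boole]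
  refine Finset.sum_congr rfl fun C _ => ?_
  simp only [incMat, Matrix.transpose_apply, Finset.subset_inter_iff, ite_and]
  split_ifs <;> simp

/-- Chain identity: `W_{t,t+1} * W_{t+1,k} = (k - t) • W_{t,k}`. -/
lemma incMat_chain (t k : ℕ) :
    incMat R n t (t + 1) * incMat R n (t + 1) k = ((k - t : ℕ) : R) • incMat R n t k := by
  ext A S
  rw [incMat_mul_apply, Matrix.smul_apply]
  by_cases h : A.1 ⊆ S.1
  · rw [card_interval A.1 S.1 h (t + 1) (by rw [A.2]; omega)]
    have h1 : t + 1 - A.1.card = 1 := by rw [A.2]; omega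
    rw [h1, Nat.choose_one_right, A.2, S.2]
    simp [incMat, h]
  · have hz : (Finset.univ.filter fun B : KSubsets n (t + 1) =>
        A.1 ⊆ B.1 ∧ B.1 ⊆ S.1).card = 0 := by
      rw [Finset.card_eq_zero, Finset.filter_eq_empty_iff]
      intro B _ hB
      exact h (hB.1.trans hB.2)
    rw [hz]
    simp [incMat, h]

/-- Gram identity: `W_{j,j+1} W_{j,j+1}ᵀ = W_{j-1,j}ᵀ W_{j-1,j} + (n - 2j) • 1`. -/
lemma incMat_gram (j : ℕ) (hj1 : 1 ≤ j) (hjn : 2 * j ≤ n) :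
    incMat R n j (j + 1) * (incMat R n j (j + 1))ᵀ
      = (incMat R n (j - 1) j)ᵀ * incMat R n (j - 1) j + ((n : R) - 2 * j) • 1 := by
  ext A B
  rw [incMat_mul_transpose_apply, Matrix.add_apply, incMat_transpose_mul_apply,
    Matrix.smul_apply, Matrix.one_apply]
  have hcards : (A.1 ∪ B.1).card + (A.1 ∩ B.1).card = 2 * j := by
    have h := Finset.card_union_add_card_inter A.1 B.1
    rw [A.2, B.2] at h
    omega
  rw [card_subsets]
  by_cases hAB : A = B
  · subst hAB
    rw [Finset.union_self, Finset.inter_self, A.2,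
      card_supersets A.1 (j + 1) (by rw [A.2]; omega)]
    rw [A.2]
    have h1 : j + 1 - j = 1 := by omega
    rw [h1, Nat.choose_one_right]
    have h2 : j.choose (j - 1) = j := by
      rw [Nat.choose_symm hj1, Nat.choose_one_right]
    rw [h2, if_pos rfl, smul_eq_mul, mul_one]
    have hjn' : (j : ℕ) ≤ n := by omega
    push_cast [Nat.cast_sub hjn']
    ring
  · rw [if_neg hAB, smul_zero, add_zero]
    have hilt : (A.1 ∩ B.1).card < j := by
      rcases lt_or_eq_of_le (le_of_le_of_eq (Finset.card_le_card Finset.inter_subset_left) A.2)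
        with h | h
      · exact h
      · exfalso
        have hsub : A.1 ∩ B.1 = A.1 :=
          Finset.eq_of_subset_of_card_le Finset.inter_subset_left (by rw [A.2, h])
        have hAsubB : A.1 ⊆ B.1 := by
          rw [← hsub]; exact Finset.inter_subset_right
        exact hAB (Subtype.ext (Finset.eq_of_subset_of_card_le hAsubB (by rw [A.2, B.2])))
    by_cases hi : (A.1 ∩ B.1).card = j - 1
    · have hu : (A.1 ∪ B.1).card = j + 1 := by omega
      rw [card_supersets (A.1 ∪ B.1) (j + 1) (by omega), hu, hi, Nat.sub_self,
        Nat.choose_zero_right, Nat.choose_self]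
    · have hu : j + 1 < (A.1 ∪ B.1).card := by omega
      rw [card_supersets_zero (A.1 ∪ B.1) (j + 1) hu,
        Nat.choose_eq_zero_of_lt (by omega)]

/-- Gram identity, base case `j = 0`. -/
lemma incMat_gram_zero :
    incMat R n 0 1 * (incMat R n 0 1)ᵀ = (n : R) • 1 := by
  ext A B
  have hA : A.1 = ∅ := Finset.card_eq_zero.mp A.2
  have hB : B.1 = ∅ := Finset.card_eq_zero.mp B.2
  have hAB : A = B := Subtype.ext (hA.trans hB.symm)
  subst hAB
  rw [incMat_mul_transpose_apply, Finset.union_self, hA,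
    card_supersets ∅ 1 (by simp), Matrix.smul_apply, Matrix.one_apply, if_pos rfl]
  simp

end entries

section posdef
variable {n : ℕ}

private lemma dot_self_pos {α : Type*} [Fintype α] {v : α → ℚ} (hv : v ≠ 0) :
    0 < v ⬝ᵥ v := by
  rcases (Finset.sum_nonneg fun i _ => mul_self_nonneg (v i)).lt_or_eq with h | h
  · exact h
  · exact absurd (dotProduct_self_eq_zero.mp h.symm) hv

private lemma dot_self_nonneg {α : Type*} [Fintype α] (v : α → ℚ) :
    0 ≤ v ⬝ᵥ v :=
  Finset.sum_nonneg fun i _ => mul_self_nonneg (v i)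

lemma gram_pos (j : ℕ) (hj : 2 * j < n) (v : KSubsets n j → ℚ) (hv : v ≠ 0) :
    0 < v ⬝ᵥ (incMat ℚ n j (j + 1) * (incMat ℚ n j (j + 1))ᵀ).mulVec v := by
  have hvv : 0 < v ⬝ᵥ v := dot_self_pos hv
  cases j with
  | zero =>
    rw [incMat_gram_zero, Matrix.smul_mulVec, Matrix.one_mulVec,
      dotProduct_smul, smul_eq_mul]
    have hn : (0 : ℚ) < n := by exact_mod_cast (by omega : 0 < n)
    positivity
  | succ j' =>
    rw [incMat_gram (j' + 1) (by omega) (by omega), Matrix.add_mulVec,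
      dotProduct_add, Matrix.smul_mulVec, Matrix.one_mulVec,
      dotProduct_smul, smul_eq_mul]
    have h1 : v ⬝ᵥ ((incMat ℚ n (j' + 1 - 1) (j' + 1))ᵀ * incMat ℚ n (j' + 1 - 1) (j' + 1)).mulVec v
        = (incMat ℚ n (j' + 1 - 1) (j' + 1)).mulVec v ⬝ᵥ (incMat ℚ n (j' + 1 - 1) (j' + 1)).mulVec v := by
      rw [← Matrix.mulVec_mulVec, Matrix.dotProduct_mulVec, Matrix.vecMul_transpose]
    rw [h1]
    have h2 : (0 : ℚ) < (n : ℚ) - 2 * (j' + 1 : ℕ) := by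
      have : ((2 * (j' + 1) : ℕ) : ℚ) < (n : ℚ) := by exact_mod_cast hj
      push_cast at this ⊢
      linarith
    have h3 := dot_self_nonneg ((incMat ℚ n (j' + 1 - 1) (j' + 1)).mulVec v)
    push_cast at h2 ⊢
    nlinarith

lemma gram_det_ne_zero (j : ℕ) (hj : 2 * j < n) :
    (incMat ℚ n j (j + 1) * (incMat ℚ n j (j + 1))ᵀ).det ≠ 0 := by
  intro h
  obtain ⟨v, hv, hveq⟩ := Matrix.exists_mulVec_eq_zero_iff.mpr h
  have := gram_pos j hj v hv
  rw [hveq, dotProduct_zero] at this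
  exact lt_irrefl 0 this

end posdef

section overK
variable {n : ℕ} (K : Type*) [Field K] [CharZero K]

lemma incMat_map (j l : ℕ) :
    (incMat ℚ n j l).map (algebraMap ℚ K) = incMat K n j l := by
  ext A S
  simp [incMat, Matrix.map_apply, apply_ite]

lemma gram_det_ne_zero_K (j : ℕ) (hj : 2 * j < n) :
    (incMat K n j (j + 1) * (incMat K n j (j + 1))ᵀ).det ≠ 0 := by
  rw [← incMat_map K, ← Matrix.transpose_map, ← Matrix.map_mul,
    ← RingHom.mapMatrix_apply, ← RingHom.map_det]
  intro h
  exact gram_det_ne_zero j hj ((map_eq_zero_iff _ (algebraMap ℚ K).injective).mp h)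

lemma surj_step (j : ℕ) (hj : 2 * j < n) :
    Function.Surjective ((incMat K n j (j + 1)).mulVec) := by
  have hU : IsUnit (incMat K n j (j + 1) * (incMat K n j (j + 1))ᵀ) :=
    (Matrix.isUnit_iff_isUnit_det _).mpr (isUnit_iff_ne_zero.mpr (gram_det_ne_zero_K K j hj))
  have hs := Matrix.mulVec_surjective_iff_isUnit.mpr hU
  intro w
  obtain ⟨v, hv⟩ := hs w
  exact ⟨(incMat K n j (j + 1))ᵀ.mulVec v, by rw [Matrix.mulVec_mulVec]; exact hv⟩

lemma incMat_self (t : ℕ) : incMat K n t t = 1 := by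
  ext A S
  by_cases h : A.1 ⊆ S.1
  · have hAS : A = S := Subtype.ext (Finset.eq_of_subset_of_card_le h (by rw [A.2, S.2]))
    subst hAS
    simp [incMat, Matrix.one_apply]
  · have hne : A ≠ S := fun e => h (by rw [e])
    simp [incMat, h, Matrix.one_apply_ne hne]

lemma surj_main : ∀ d t k : ℕ, k = t + d → 2 * k ≤ n →
    Function.Surjective ((incMat K n t k).mulVec) := by
  intro d
  induction d with
  | zero =>
    intro t k hk _
    have hk' : k = t := by omega
    subst hk'
    rw [incMat_self]
    intro w
    exact ⟨w, Matrix.one_mulVec w⟩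
  | succ d ih =>
    intro t k hk hle
    have hchain := incMat_chain (R := K) (n := n) t k
    have hc : ((k - t : ℕ) : K) ≠ 0 := by
      have h2 : (k - t : ℕ) = d + 1 := by omega
      rw [h2]
      exact Nat.cast_ne_zero.mpr (Nat.succ_ne_zero d)
    intro w
    obtain ⟨u, hu⟩ := surj_step K t (by omega) (((k - t : ℕ) : K) • w)
    obtain ⟨v, hv⟩ := ih (t + 1) k (by omega) (by omega) u
    refine ⟨v, ?_⟩
    have heq : (incMat K n t (t + 1) * incMat K n (t + 1) k).mulVec v
        = ((k - t : ℕ) : K) • w := by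
      rw [← Matrix.mulVec_mulVec, hv, hu]
    rw [hchain, Matrix.smul_mulVec] at heq
    exact smul_right_injective _ hc heq

end overK

section bridge
variable {n : ℕ} (K : Type*) [Field K] [CharZero K]

lemma psi_apply (t k : ℕ) (f : PM K n k) (A : KSubsets n t) :
    psiPM K n t k f A = (incMat K n t k).mulVec (⇑f) A := by
  rw [psiPM, Finsupp.lsum_apply]
  rw [Finsupp.sum]
  have hterm : ∀ S : KSubsets n k,
      (LinearMap.toSpanSingleton K (PM K n t)
        (∑ A' : KSubsets n t, if A'.1 ⊆ S.1 then Finsupp.single A' (1 : K) else 0) (f S)) A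
      = incMat K n t k A S * f S := by
    intro S
    rw [LinearMap.toSpanSingleton_apply]
    rw [Finsupp.smul_apply, Finsupp.finset_sum_apply]
    have : ∀ A' : KSubsets n t,
        (if A'.1 ⊆ S.1 then Finsupp.single A' (1 : K) else 0) A
        = if A' = A then (if A.1 ⊆ S.1 then (1 : K) else 0) else 0 := by
      intro A'
      split_ifs with h1 h2 h3 <;>
        simp_all [Finsupp.single_apply]
    rw [Finset.sum_congr rfl fun A' _ => this A', Finset.sum_ite_eq' Finset.univ A
      (fun _ => if A.1 ⊆ S.1 then (1 : K) else 0), if_pos (Finset.mem_univ A)]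
    simp [incMat, mul_comm]
  rw [Finsupp.finset_sum_apply]
  rw [Finset.sum_congr rfl fun S _ => hterm S]
  rw [Matrix.mulVec, dotProduct]
  exact Finset.sum_subset (Finset.subset_univ _)
    (fun S _ hS => by rw [Finsupp.notMem_support_iff.mp hS, mul_zero])

lemma psi_surjective (t k : ℕ) (htk : t ≤ k) (hkn : 2 * k ≤ n) :
    Function.Surjective (psiPM K n t k) := by
  intro g
  obtain ⟨u, hu⟩ := surj_main K (k - t) t k (by omega) hkn (⇑g)
  refine ⟨Finsupp.equivFunOnFinite.symm u, ?_⟩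
  ext A
  rw [psi_apply]
  have hcoe : ⇑(Finsupp.equivFunOnFinite.symm u) = u := rfl
  rw [hcoe, hu]

end bridge

/-- The inclusion matrix `W_{t,k}` has full rank `C(n,t)` (characteristic zero). -/
theorem inclusion_matrix_full_rank (K : Type*) [Field K] [CharZero K] (n t k : ℕ)
    (htk : t ≤ k) (hkn : 2 * k ≤ n) :
    Module.finrank K (LinearMap.range (psiPM K n t k)) = n.choose t := by
  rw [LinearMap.range_eq_top.mpr (psi_surjective K t k htk hkn), finrank_top,
    Module.finrank_finsupp_self]
  exact (Fintype.card_finset_len t).trans (by rw [Fintype.card_fin])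
end

section
/- Let t < k ≤ n/2 and let ψ: M_k → M_t be the linear map defined on a k-subset {x₁,...,x_k} by ψ({x₁,...,x_k}) = Σ (all t-subsets of {x₁,...,x_k}), where M_j denotes the K-vector space with basis the j-subsets of {1,...,n}. Then the kernel of ψ has dimension C(n,k) − C(n,t). -/
open Finset LinearMap Matrix Function

section Aux

/-- The "down" map `M_b → M_a`; the same construction as `psiPM`. -/
noncomputable def dmapPM (K : Type*) [Field K] (n a b : ℕ) : PM K n b →ₗ[K] PM K n a :=
  Finsupp.lsum K fun S : KSubsets n b => LinearMap.toSpanSingleton K (PM K n a)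
    (∑ A : KSubsets n a, if A.1 ⊆ S.1 then Finsupp.single A (1 : K) else 0)

/-- The "up" map `M_a → M_b` sending an `a`-subset to the sum of its `b`-supersets. -/
noncomputable def umapPM (K : Type*) [Field K] (n a b : ℕ) : PM K n a →ₗ[K] PM K n b :=
  Finsupp.lsum K fun A : KSubsets n a => LinearMap.toSpanSingleton K (PM K n b)
    (∑ B : KSubsets n b, if A.1 ⊆ B.1 then Finsupp.single B (1 : K) else 0)

lemma dmapPM_apply (K : Type*) [Field K] (n a b : ℕ) (y : PM K n b) (A : KSubsets n a) :
    dmapPM K n a b y A = ∑ B : KSubsets n b, if A.1 ⊆ B.1 then y B else 0 := by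
  rw [dmapPM, Finsupp.lsum_apply, Finsupp.sum_fintype]
  · rw [Finsupp.finset_sum_apply]
    refine Finset.sum_congr rfl fun B _ => ?_
    simp only [LinearMap.toSpanSingleton_apply, Finsupp.smul_apply, Finsupp.finset_sum_apply]
    rw [Finset.sum_congr rfl (g := fun A' : KSubsets n a =>
        if A' = A then (if A.1 ⊆ B.1 then (1:K) else 0) else 0)]
    · rw [Finset.sum_ite_eq' Finset.univ A]
      simp [smul_eq_mul, mul_comm]
    · intro A' _
      by_cases h1 : A' = A <;> by_cases h2 : A'.1 ⊆ B.1 <;>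
        simp_all [Finsupp.single_apply, eq_comm]
  · intro; simp

lemma dmapPM_single_apply (K : Type*) [Field K] (n a b : ℕ) (S : KSubsets n b) (y : K)
    (A : KSubsets n a) :
    dmapPM K n a b (Finsupp.single S y) A = if A.1 ⊆ S.1 then y else 0 := by
  rw [dmapPM_apply]
  rw [Finset.sum_congr rfl (g := fun B : KSubsets n b =>
      if B = S then (if A.1 ⊆ S.1 then y else 0) else 0)]
  · rw [Finset.sum_ite_eq' Finset.univ S]
    simp
  · intro B _
    by_cases h1 : B = S <;> by_cases h2 : A.1 ⊆ B.1 <;>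
      simp_all [Finsupp.single_apply, eq_comm]

lemma umapPM_single_apply (K : Type*) [Field K] (n a b : ℕ) (A : KSubsets n a) (y : K)
    (B : KSubsets n b) :
    umapPM K n a b (Finsupp.single A y) B = if A.1 ⊆ B.1 then y else 0 := by
  rw [umapPM, Finsupp.lsum_single, LinearMap.toSpanSingleton_apply, Finsupp.smul_apply,
    Finsupp.finset_sum_apply]
  rw [Finset.sum_congr rfl (g := fun B' : KSubsets n b =>
      if B' = B then (if A.1 ⊆ B.1 then (1:K) else 0) else 0)]
  · rw [Finset.sum_ite_eq' Finset.univ B]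
    simp
  · intro B' _
    by_cases h1 : B' = B <;> by_cases h2 : A.1 ⊆ B'.1 <;>
      simp_all [Finsupp.single_apply, eq_comm]

/-- The inclusion matrix `W_{a,b}`. -/
def Wmat (F : Type*) [Field F] (n a b : ℕ) : Matrix (KSubsets n a) (KSubsets n b) F :=
  fun A B => if A.1 ⊆ B.1 then 1 else 0

noncomputable abbrev pmBasis (K : Type*) [Field K] (n j : ℕ) :
    Module.Basis (KSubsets n j) K (PM K n j) :=
  Finsupp.basisSingleOne

lemma toMatrix_dmapPM (K : Type*) [Field K] (n a b : ℕ) :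
    LinearMap.toMatrix (pmBasis K n b) (pmBasis K n a) (dmapPM K n a b) = Wmat K n a b := by
  ext A S
  rw [LinearMap.toMatrix_apply, Finsupp.basisSingleOne_repr]
  show dmapPM K n a b ((pmBasis K n b) S) A = _
  rw [Finsupp.coe_basisSingleOne, dmapPM_single_apply]
  rfl

lemma toMatrix_umapPM (K : Type*) [Field K] (n a b : ℕ) :
    LinearMap.toMatrix (pmBasis K n a) (pmBasis K n b) (umapPM K n a b) = (Wmat K n a b)ᵀ := by
  ext B A
  rw [LinearMap.toMatrix_apply, Finsupp.basisSingleOne_repr]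
  show umapPM K n a b ((pmBasis K n a) A) B = _
  rw [Finsupp.coe_basisSingleOne, umapPM_single_apply]
  rfl

lemma count_between (n m : ℕ) (A C : Finset (Fin n)) (hAC : A ⊆ C) (ham : A.card ≤ m) :
    (Finset.univ.filter fun B : KSubsets n m => A ⊆ B.1 ∧ B.1 ⊆ C).card
      = (C.card - A.card).choose (m - A.card) := by
  rw [← Finset.card_sdiff_of_subset hAC, ← Finset.card_powersetCard (m - A.card) (C \ A)]
  refine Finset.card_bij' (fun B _ => B.1 \ A) (fun s hs => ⟨s ∪ A, ?_⟩) ?_ ?_ ?_ ?_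
  · rw [Finset.mem_powersetCard] at hs
    rw [Finset.card_union_of_disjoint, hs.2, Nat.sub_add_cancel ham]
    exact Finset.sdiff_disjoint.mono_left hs.1
  · intro B hB
    simp only [Finset.mem_filter, Finset.mem_univ, true_and] at hB
    rw [Finset.mem_powersetCard]
    exact ⟨Finset.sdiff_subset_sdiff hB.2 le_rfl, by rw [Finset.card_sdiff_of_subset hB.1, B.2]⟩
  · intro s hs
    rw [Finset.mem_powersetCard] at hs
    simp only [Finset.mem_filter, Finset.mem_univ, true_and]
    exact ⟨Finset.subset_union_right, Finset.union_subset (hs.1.trans (Finset.sdiff_subset)) hAC⟩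
  · intro B hB
    simp only [Finset.mem_filter, Finset.mem_univ, true_and] at hB
    exact Subtype.ext (by simp [Finset.sdiff_union_of_subset hB.1])
  · intro s hs
    rw [Finset.mem_powersetCard] at hs
    exact Finset.union_sdiff_cancel_right (Finset.sdiff_disjoint.mono_left hs.1)

lemma count_supersets (n m : ℕ) (A : Finset (Fin n)) (ham : A.card ≤ m) :
    (Finset.univ.filter fun B : KSubsets n m => A ⊆ B.1).card
      = (n - A.card).choose (m - A.card) := by
  have : (Finset.univ.filter fun B : KSubsets n m => A ⊆ B.1)
      = (Finset.univ.filter fun B : KSubsets n m => A ⊆ B.1 ∧ B.1 ⊆ Finset.univ) := by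
    apply Finset.filter_congr; intro B _; simp
  rw [this, count_between n m A Finset.univ (Finset.subset_univ A) ham]
  simp

lemma count_subsets (n m : ℕ) (C : Finset (Fin n)) :
    (Finset.univ.filter fun B : KSubsets n m => B.1 ⊆ C).card = C.card.choose m := by
  have : (Finset.univ.filter fun B : KSubsets n m => B.1 ⊆ C)
      = (Finset.univ.filter fun B : KSubsets n m => ∅ ⊆ B.1 ∧ B.1 ⊆ C) := by
    apply Finset.filter_congr; intro B _; simp
  rw [this, count_between n m ∅ C (Finset.empty_subset C) (Nat.zero_le m)]
  simp

lemma count_supersets_zero (n m : ℕ) (A : Finset (Fin n)) (ham : m < A.card) :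
    (Finset.univ.filter fun B : KSubsets n m => A ⊆ B.1).card = 0 := by
  rw [Finset.card_eq_zero]
  refine Finset.filter_false_of_mem fun B _ hB => ?_
  have := Finset.card_le_card hB
  omega

/-- The key `sl₂`-type identity `W_{j,j+1} W_{j,j+1}ᵀ = W_{j-1,j}ᵀ W_{j-1,j} + (n-2j)·1`. -/
lemma Wmat_identity (F : Type*) [Field F] (n i : ℕ) (h : 2 * (i + 1) ≤ n) :
    Wmat F n (i+1) (i+2) * (Wmat F n (i+1) (i+2))ᵀ
      = (Wmat F n i (i+1))ᵀ * Wmat F n i (i+1) + ((n - 2 * (i+1) : ℕ) : F) • 1 := by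
  ext S T
  have hcards : (S.1 ∪ T.1).card + (S.1 ∩ T.1).card = 2 * (i + 1) := by
    rw [Finset.card_union_add_card_inter, S.2, T.2]; ring
  have hl : (Wmat F n (i+1) (i+2) * (Wmat F n (i+1) (i+2))ᵀ) S T
      = ((Finset.univ.filter fun B : KSubsets n (i+2) => S.1 ∪ T.1 ⊆ B.1).card : F) := by
    rw [Matrix.mul_apply, ← Finset.sum_boole]
    refine Finset.sum_congr rfl fun B _ => ?_
    simp only [Wmat, Matrix.transpose_apply, Finset.union_subset_iff]
    by_cases h1 : S.1 ⊆ B.1 <;> by_cases h2 : T.1 ⊆ B.1 <;> simp [h1, h2]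
  have hr : ((Wmat F n i (i+1))ᵀ * Wmat F n i (i+1)) S T
      = ((Finset.univ.filter fun R : KSubsets n i => R.1 ⊆ S.1 ∩ T.1).card : F) := by
    rw [Matrix.mul_apply, ← Finset.sum_boole]
    refine Finset.sum_congr rfl fun R _ => ?_
    simp only [Wmat, Matrix.transpose_apply, Finset.subset_inter_iff]
    by_cases h1 : R.1 ⊆ S.1 <;> by_cases h2 : R.1 ⊆ T.1 <;> simp [h1, h2]
  rw [Matrix.add_apply, hl, hr, Matrix.smul_apply, Matrix.one_apply]
  rw [count_subsets n i (S.1 ∩ T.1)]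
  by_cases hST : S = T
  · subst hST
    rw [if_pos rfl, Finset.union_self, Finset.inter_self]
    rw [count_supersets n (i+2) S.1 (by rw [S.2]; omega), S.2]
    have e1 : n - (i+1) = (n - (i+2)) + 1 := by omega
    have e2 : (i+2) - (i+1) = 1 := by omega
    rw [e1, e2, Nat.choose_one_right]
    have e3 : (i+1).choose i = i + 1 := Nat.choose_succ_self_right i
    rw [e3, smul_eq_mul, mul_one]
    rw [← Nat.cast_add]
    congr 1
    omega
  · rw [if_neg hST, smul_eq_mul, mul_zero, add_zero]
    have hSsub : S.1 ⊆ S.1 ∪ T.1 := Finset.subset_union_left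
    have hne : S.1 ≠ S.1 ∪ T.1 := by
      intro hEq
      have hT : T.1 ⊆ S.1 := by rw [hEq]; exact Finset.subset_union_right
      exact hST (Subtype.ext (Finset.eq_of_subset_of_card_le hT (by rw [S.2, T.2])).symm)
    have hu : i + 2 ≤ (S.1 ∪ T.1).card := by
      have h1 : S.1.card < (S.1 ∪ T.1).card :=
        Finset.card_lt_card (Finset.ssubset_iff_subset_ne.mpr ⟨hSsub, hne⟩)
      rw [S.2] at h1; omega
    rcases eq_or_lt_of_le hu with hu2 | hu2
    · rw [count_supersets n (i+2) (S.1 ∪ T.1) (by omega), ← hu2]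
      have hv : (S.1 ∩ T.1).card = i := by omega
      rw [hv]
      simp
    · rw [count_supersets_zero n (i+2) (S.1 ∪ T.1) (by omega)]
      have hv : (S.1 ∩ T.1).card < i := by omega
      rw [Nat.choose_eq_zero_of_lt hv]

lemma WQ_det_ne_zero (n i : ℕ) (h : 2 * (i+1) < n) :
    (Wmat ℚ n (i+1) (i+2) * (Wmat ℚ n (i+1) (i+2))ᵀ).det ≠ 0 := by
  intro h0
  obtain ⟨v, hv, hGv⟩ := (Matrix.exists_mulVec_eq_zero_iff).mpr h0
  set V := Wmat ℚ n i (i+1)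
  set c : ℚ := ((n - 2 * (i+1) : ℕ) : ℚ)
  have hG : Wmat ℚ n (i+1) (i+2) * (Wmat ℚ n (i+1) (i+2))ᵀ = Vᵀ * V + c • 1 :=
    Wmat_identity ℚ n i (le_of_lt h)
  have key : (0:ℚ) = (V *ᵥ v) ⬝ᵥ (V *ᵥ v) + c * (v ⬝ᵥ v) := by
    have h1 : v ⬝ᵥ ((Vᵀ * V + c • 1) *ᵥ v) = 0 := by rw [← hG, hGv, dotProduct_zero]
    rw [Matrix.add_mulVec, dotProduct_add, smul_mulVec, Matrix.one_mulVec,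
      dotProduct_smul, ← Matrix.mulVec_mulVec, Matrix.dotProduct_mulVec,
      Matrix.vecMul_transpose] at h1
    rw [← h1]; simp [smul_eq_mul]
  have hc : 1 ≤ c := by
    have h5 : 1 ≤ (n - 2 * (i+1) : ℕ) := by omega
    show (1:ℚ) ≤ ((n - 2 * (i+1) : ℕ) : ℚ)
    exact_mod_cast h5
  have h2 : 0 ≤ (V *ᵥ v) ⬝ᵥ (V *ᵥ v) := Finset.sum_nonneg fun i _ => mul_self_nonneg _
  have h3 : 0 ≤ v ⬝ᵥ v := Finset.sum_nonneg fun i _ => mul_self_nonneg _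
  have h4 : v ⬝ᵥ v = 0 := by nlinarith
  exact hv (dotProduct_self_eq_zero.mp h4)

lemma dmapPM_step_surjective (K : Type*) [Field K] [CharZero K] (n j : ℕ) (hj : 2*j < n) :
    Surjective (dmapPM K n j (j+1)) := by
  cases j with
  | zero =>
    intro y
    have hn : 0 < n := by omega
    refine ⟨Finsupp.single ⟨{⟨0, hn⟩}, Finset.card_singleton _⟩ (y ⟨∅, Finset.card_empty⟩), ?_⟩
    ext A
    rw [dmapPM_single_apply]
    have hA : A = ⟨∅, Finset.card_empty⟩ := Subtype.ext (Finset.card_eq_zero.mp A.2)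
    subst hA
    simp
  | succ i =>
    have hdet : (Wmat K n (i+1) (i+2) * (Wmat K n (i+1) (i+2))ᵀ).det ≠ 0 := by
      have hmapW : Wmat K n (i+1) (i+2) = (Wmat ℚ n (i+1) (i+2)).map (Rat.castHom K) := by
        ext A B; by_cases hAB : A.1 ⊆ B.1 <;> simp [Wmat, hAB]
      rw [hmapW, ← Matrix.transpose_map, ← Matrix.map_mul, ← RingHom.mapMatrix_apply,
        ← RingHom.map_det]
      simpa [Rat.cast_eq_zero] using WQ_det_ne_zero n i hj
    have hcomp : LinearMap.toMatrix (pmBasis K n (i+1)) (pmBasis K n (i+1))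
        (dmapPM K n (i+1) (i+2) ∘ₗ umapPM K n (i+1) (i+2))
        = Wmat K n (i+1) (i+2) * (Wmat K n (i+1) (i+2))ᵀ := by
      rw [LinearMap.toMatrix_comp _ (pmBasis K n (i+2)) _, toMatrix_dmapPM, toMatrix_umapPM]
    have hunit : IsUnit (LinearMap.toMatrix (pmBasis K n (i+1)) (pmBasis K n (i+1))
        (dmapPM K n (i+1) (i+2) ∘ₗ umapPM K n (i+1) (i+2))).det := by
      rw [hcomp]; exact isUnit_iff_ne_zero.mpr hdet
    have hsurj : Surjective (dmapPM K n (i+1) (i+2) ∘ₗ umapPM K n (i+1) (i+2)) := by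
      have he : (LinearEquiv.ofIsUnitDet hunit).toLinearMap
          = dmapPM K n (i+1) (i+2) ∘ₗ umapPM K n (i+1) (i+2) :=
        LinearEquiv.coe_ofIsUnitDet hunit
      have hs : Surjective ⇑((LinearEquiv.ofIsUnitDet hunit).toLinearMap) :=
        (LinearEquiv.ofIsUnitDet hunit).surjective
      rwa [he] at hs
    exact Surjective.of_comp (g := ⇑(umapPM K n (i+1) (i+2))) hsurj

lemma dmapPM_comp (K : Type*) [Field K] (n a b : ℕ) (hab : a ≤ b) :
    dmapPM K n a b ∘ₗ dmapPM K n b (b+1) = ((b + 1 - a : ℕ) : K) • dmapPM K n a (b+1) := by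
  refine Finsupp.lhom_ext fun S y => ?_
  ext A
  rw [LinearMap.comp_apply, LinearMap.smul_apply, Finsupp.smul_apply, dmapPM_apply,
    dmapPM_single_apply]
  have hB : ∀ B : KSubsets n b,
      (if A.1 ⊆ B.1 then dmapPM K n b (b+1) (Finsupp.single S y) B else 0)
      = if A.1 ⊆ B.1 ∧ B.1 ⊆ S.1 then y else 0 := by
    intro B
    rw [dmapPM_single_apply, ite_and]
  rw [Finset.sum_congr rfl fun B _ => hB B]
  rw [Finset.sum_ite, Finset.sum_const_zero, add_zero, Finset.sum_const]
  by_cases hAS : A.1 ⊆ S.1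
  · rw [count_between n b A.1 S.1 hAS (by rw [A.2]; exact hab), A.2, S.2]
    have h1 : b + 1 - a = (b - a) + 1 := by omega
    rw [h1, Nat.choose_succ_self_right, ← h1, if_pos hAS]
    simp [nsmul_eq_mul, mul_comm]
  · have : Finset.univ.filter (fun B : KSubsets n b => A.1 ⊆ B.1 ∧ B.1 ⊆ S.1) = ∅ := by
      refine Finset.filter_false_of_mem fun B _ hB => hAS (hB.1.trans hB.2)
    simp [this, hAS]

lemma dmapPM_self (K : Type*) [Field K] (n t : ℕ) :
    dmapPM K n t t = LinearMap.id := by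
  refine LinearMap.ext fun y => Finsupp.ext fun A => ?_
  rw [dmapPM_apply]
  rw [Finset.sum_congr rfl (g := fun B : KSubsets n t => if B = A then y A else 0)]
  · rw [Finset.sum_ite_eq' Finset.univ A]
    simp
  · intro B _
    by_cases h1 : B = A
    · subst h1; simp
    · rw [if_neg h1, if_neg]
      intro hAB
      exact h1 (Subtype.ext (Finset.eq_of_subset_of_card_le hAB (by rw [A.2, B.2])).symm)

lemma dmapPM_surjective (K : Type*) [Field K] [CharZero K] (n t k : ℕ) (htk : t ≤ k)
    (hkn : 2 * k ≤ n + 1) : Surjective (dmapPM K n t k) := by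
  induction k, htk using Nat.le_induction with
  | base => rw [dmapPM_self]; exact surjective_id
  | succ k hk ih =>
    have h1 : Surjective (dmapPM K n t k) := ih (by omega)
    have h2 : Surjective (dmapPM K n k (k+1)) := dmapPM_step_surjective K n k (by omega)
    have hcomp : Surjective ⇑(dmapPM K n t k ∘ₗ dmapPM K n k (k+1)) := by
      rw [LinearMap.coe_comp]; exact h1.comp h2
    rw [dmapPM_comp K n t k hk] at hcomp
    have hc : ((k + 1 - t : ℕ) : K) ≠ 0 := Nat.cast_ne_zero.mpr (by omega)
    intro y
    obtain ⟨x, hx⟩ := hcomp (((k + 1 - t : ℕ) : K) • y)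
    refine ⟨x, ?_⟩
    rw [LinearMap.smul_apply] at hx
    exact smul_right_injective _ hc hx

lemma finrank_PM (K : Type*) [Field K] (n j : ℕ) :
    Module.finrank K (PM K n j) = n.choose j := by
  rw [Module.finrank_finsupp_self, Fintype.card_finset_len, Fintype.card_fin]

lemma choose_le_step (n j : ℕ) (h : 2 * j < n) : n.choose j ≤ n.choose (j+1) := by
  have h1 := Nat.choose_succ_right_eq n j
  have h2 : n.choose j * (j+1) ≤ n.choose j * (n - j) :=
    Nat.mul_le_mul_left _ (by omega)
  rw [← h1] at h2
  exact Nat.le_of_mul_le_mul_right h2 (by omega)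

lemma choose_mono_aux (n t k : ℕ) (htk : t ≤ k) (hkn : 2 * k ≤ n + 1) :
    n.choose t ≤ n.choose k := by
  induction k, htk using Nat.le_induction with
  | base => exact le_rfl
  | succ k hk ih => exact (ih (by omega)).trans (choose_le_step n k (by omega))

end Aux

/-- The kernel of `ψ = ψ_k^{(k−t)} : M_k → M_t` (the space of `t`-`(n,k)` trades)
has dimension `C(n,k) − C(n,t)`. -/
theorem dim_ker_inclusion_map (K : Type*) [Field K] [CharZero K] (n t k : ℕ)
    (htk : t < k) (hkn : 2 * k ≤ n) :
    Module.finrank K (LinearMap.ker (psiPM K n t k)) = n.choose k - n.choose t := by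
  have hpsi : psiPM K n t k = dmapPM K n t k := rfl
  have hsurj : Surjective (psiPM K n t k) := by
    rw [hpsi]; exact dmapPM_surjective K n t k (le_of_lt htk) (by omega)
  haveI : Module.Finite K (PM K n k) := Module.Finite.of_basis (pmBasis K n k)
  haveI : Module.Finite K (PM K n t) := Module.Finite.of_basis (pmBasis K n t)
  have h1 := LinearMap.finrank_range_add_finrank_ker (psiPM K n t k)
  rw [LinearMap.range_eq_top.mpr hsurj, finrank_top, finrank_PM, finrank_PM] at h1
  have h2 : n.choose t ≤ n.choose k := choose_mono_aux n t k (le_of_lt htk) (by omega)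
  omega
end
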